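/- Suppose N ≥ 3 vectors h₁, …, h_N in R^2 satisfy: each |h_j| > 0, their span is two-dimensional, and for every j (indices mod N) there is a constant κ ∈ ℝ with κ(h_{j+1} + h_j)^⊥ + (h_j/|h_j| - h_{j+1}/|h_{j+1}|) = 0. Then all |h_j| are equal. -/

import Mathlib

/-!
Write `uⱼ = hⱼ / |hⱼ|`. Pairing the j-th equation with `hⱼ + hⱼ₊₁` kills the rotated term and
leaves `(|hⱼ| - |hⱼ₊₁|) (|hⱼ| |hⱼ₊₁| - ⟨hⱼ, hⱼ₊₁⟩) = 0`, so consecutive lengths agree unless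
`hⱼ, hⱼ₊₁` point in the same direction. In that case `uⱼ₊₁ = uⱼ` and `hⱼ + hⱼ₊₁ ≠ 0`, which forces
`κ = 0`; but for `κ = 0` all `uⱼ` coincide, contradicting that the `hⱼ` span the plane.
-/

open RealInnerProductSpace Module

/-- Clockwise rotation by π/2: (v₁, v₂) ↦ (v₂, -v₁). -/
noncomputable def perp (v : EuclideanSpace ℝ (Fin 2)) : EuclideanSpace ℝ (Fin 2) :=
  WithLp.toLp 2 ![v 1, -v 0]

theorem Fin.apply_eq_apply_of_forall_apply_add_one_eq {α : Type*} {N : ℕ} [NeZero N]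
    {f : Fin N → α} (hf : ∀ j, f (j + 1) = f j) (i j : Fin N) : f i = f j := by
  obtain ⟨n, rfl⟩ := Nat.exists_eq_succ_of_ne_zero (NeZero.ne N)
  have hf0 : ∀ i, f i = f 0 := fun i => by
    induction i using Fin.induction with
    | zero => rfl
    | succ i ih => rw [← Fin.coeSucc_eq_succ, hf, ih]
  rw [hf0 i, hf0 j]

section InnerProductSpace

variable {E : Type*} [NormedAddCommGroup E] [InnerProductSpace ℝ E]

theorem sameRay_iff_inner_eq_norm_mul {x y : E} : SameRay ℝ x y ↔ ⟪x, y⟫ = ‖x‖ * ‖y‖ := by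
  rw [sameRay_iff_norm_smul_eq, inner_eq_norm_mul_iff_real, eq_comm]

theorem mul_norm_mul_inner_inv_norm_smul_sub_inv_norm_smul {x y : E} (hx : x ≠ 0) (hy : y ≠ 0) :
    ‖x‖ * ‖y‖ * ⟪‖x‖⁻¹ • x - ‖y‖⁻¹ • y, x + y⟫ = (‖x‖ - ‖y‖) * (‖x‖ * ‖y‖ - ⟪x, y⟫) := by
  have hx' : ‖x‖ ≠ 0 := norm_ne_zero_iff.mpr hx
  have hy' : ‖y‖ ≠ 0 := norm_ne_zero_iff.mpr hy
  simp only [inner_sub_left, inner_add_right, real_inner_smul_left, real_inner_self_eq_norm_sq,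
    real_inner_comm x y]
  field_simp
  ring

theorem norm_eq_or_sameRay_of_inner_inv_norm_smul_sub_eq_zero {x y : E}
    (h : ⟪‖x‖⁻¹ • x - ‖y‖⁻¹ • y, x + y⟫ = 0) : ‖x‖ = ‖y‖ ∨ SameRay ℝ x y := by
  rcases eq_or_ne x 0 with rfl | hx
  · exact Or.inr (SameRay.zero_left y)
  rcases eq_or_ne y 0 with rfl | hy
  · exact Or.inr (SameRay.zero_right x)
  have key := mul_norm_mul_inner_inv_norm_smul_sub_inv_norm_smul hx hy
  rwa [h, mul_zero, eq_comm, mul_eq_zero, sub_eq_zero, sub_eq_zero, eq_comm (a := ‖x‖ * ‖y‖),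
    ← sameRay_iff_inner_eq_norm_mul] at key

theorem finrank_le_one_of_forall_inv_norm_smul_eq {ι : Type*} {v : ι → E}
    (hspan : Submodule.span ℝ (Set.range v) = ⊤) {u : E} (hu : ∀ i, ‖v i‖⁻¹ • v i = u) :
    finrank ℝ E ≤ 1 := by
  have hle : Submodule.span ℝ (Set.range v) ≤ ℝ ∙ u := by
    rw [Submodule.span_le]
    rintro _ ⟨i, rfl⟩
    rcases eq_or_ne (v i) 0 with hv | hv
    · simp [hv]
    · rw [← smul_inv_smul₀ (norm_ne_zero_iff.mpr hv) (v i), hu i]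
      exact Submodule.smul_mem _ _ (Submodule.mem_span_singleton_self u)
  rw [hspan, top_le_iff] at hle
  rw [← finrank_top ℝ E, ← hle]
  exact (finrank_span_le_card ({u} : Set E)).trans (by simp)

end InnerProductSpace

section Perp

theorem inner_perp_self (v : EuclideanSpace ℝ (Fin 2)) : ⟪perp v, v⟫ = 0 := by
  simp only [perp, PiLp.inner_apply, RCLike.inner_apply, Real.ringHom_apply, Fin.sum_univ_two,
    Matrix.cons_val_zero, Matrix.cons_val_one, Matrix.cons_val_fin_one]
  ring

theorem perp_eq_zero_iff {v : EuclideanSpace ℝ (Fin 2)} : perp v = 0 ↔ v = 0 := by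
  refine ⟨fun hv => ?_, fun hv => by simp [hv, perp]⟩
  have h0 := congrArg (· 0) hv
  have h1 := congrArg (· 1) hv
  simp only [perp, PiLp.toLp_apply, Matrix.cons_val_zero, Matrix.cons_val_one,
    PiLp.zero_apply, neg_eq_zero] at h0 h1
  ext i
  fin_cases i <;> simp [h0, h1]

variable {κ : ℝ} {x y : EuclideanSpace ℝ (Fin 2)}

theorem norm_eq_or_sameRay_of_smul_perp_add_eq_zero
    (h : κ • perp (y + x) + (‖x‖⁻¹ • x - ‖y‖⁻¹ • y) = 0) : ‖x‖ = ‖y‖ ∨ SameRay ℝ x y := by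
  apply norm_eq_or_sameRay_of_inner_inv_norm_smul_sub_eq_zero
  have := congrArg (⟪·, y + x⟫) h
  simp only [inner_add_left, real_inner_smul_left, inner_perp_self, mul_zero, zero_add,
    inner_zero_left] at this
  rwa [add_comm y x] at this

theorem eq_zero_of_smul_perp_add_eq_zero_of_sameRay (hxy : SameRay ℝ x y) (hx : x ≠ 0)
    (hy : y ≠ 0) (h : κ • perp (y + x) + (‖x‖⁻¹ • x - ‖y‖⁻¹ • y) = 0) : κ = 0 := by
  rw [(sameRay_iff_inv_norm_smul_eq_of_ne hx hy).mp hxy, sub_self, add_zero, smul_eq_zero,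
    perp_eq_zero_iff] at h
  refine h.resolve_right fun hsum => ?_
  have := hxy.symm.norm_add
  rw [hsum, norm_zero] at this
  linarith [norm_pos_iff.mpr hx, norm_pos_iff.mpr hy]

end Perp

theorem stmt_6_general (N : ℕ) [NeZero N] (h : Fin N → EuclideanSpace ℝ (Fin 2))
    (hpos : ∀ j, 0 < ‖h j‖)
    (hspan : Submodule.span ℝ (Set.range h) = ⊤)
    (κ : ℝ)
    (heq : ∀ j : Fin N,
      κ • perp (h (j + 1) + h j) + (‖h j‖⁻¹ • h j - ‖h (j + 1)‖⁻¹ • h (j + 1)) = 0) :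
    ∀ i j : Fin N, ‖h i‖ = ‖h j‖ := by
  have hne : ∀ j, h j ≠ 0 := fun j => norm_pos_iff.mp (hpos j)
  by_cases hκ : κ = 0
  · subst hκ
    have hu : ∀ j, ‖h (j + 1)‖⁻¹ • h (j + 1) = ‖h j‖⁻¹ • h j := fun j => by
      simpa [sub_eq_zero, eq_comm] using heq j
    have hrank := finrank_le_one_of_forall_inv_norm_smul_eq hspan
      (Fin.apply_eq_apply_of_forall_apply_add_one_eq (f := fun j => ‖h j‖⁻¹ • h j) hu · 0)
    simp only [finrank_euclideanSpace, Fintype.card_fin, Nat.not_ofNat_le_one] at hrank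
  · refine Fin.apply_eq_apply_of_forall_apply_add_one_eq fun j => ?_
    rcases norm_eq_or_sameRay_of_smul_perp_add_eq_zero (heq j) with hnorm | hray
    · exact hnorm.symm
    · exact absurd (eq_zero_of_smul_perp_add_eq_zero_of_sameRay hray (hne j) (hne (j + 1))
        (heq j)) hκ

theorem stmt_6 (N : ℕ) [NeZero N] (hN : 3 ≤ N) (h : Fin N → EuclideanSpace ℝ (Fin 2))
    (hpos : ∀ j, 0 < ‖h j‖)
    (hspan : Submodule.span ℝ (Set.range h) = ⊤)
    (κ : ℝ)
    (heq : ∀ j : Fin N,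
      κ • perp (h (j + 1) + h j) + (‖h j‖⁻¹ • h j - ‖h (j + 1)‖⁻¹ • h (j + 1)) = 0) :
    ∀ i j : Fin N, ‖h i‖ = ‖h j‖ :=
  stmt_6_general N h hpos hspan κ heq
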